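/- arXiv:2401.08446 — 3 statements merged into one kernel-verified Lean document; each statement's English description precedes it below -/
import Mathlib

section
/- Let g : G → ℂ be a continuous compactly supported K-invariant function such that f⋆g = g⋆f (μ-almost everywhere) for every K-invariant continuous compactly supported f : G → ℂ. Then for all x, y ∈ G one has ∫_K [ g(y⁻¹(k·x)) − Δ(y⁻¹)·g((k·x)y⁻¹) ] dk = 0. -/
/-!
Pair a test function `ψ` with `f ⋆ g` and with `g ⋆ f`: Fubini and left invariance turn these
into `∫ f t · ∫ ψ(t z) g(z) dz dt` and `∫ f t · ∫ ψ(z t) g(z) dz dt`, so commutation says that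
`t ↦ ∫ ψ(t z) g(z) dz - ∫ ψ(z t) g(z) dz` is orthogonal to every `K`-invariant test function `f`.
Averaging over `K` maps test functions to `K`-invariant test functions and is adjoint to the
average `w ↦ ∫ w(k • ·) dk`, so a continuous function orthogonal to all `K`-invariant test
functions has vanishing `K`-average. For `K`-invariant `ψ` the function above is itself
`K`-invariant, hence zero. Substituting `z ↦ y z` and `z ↦ z y` (the latter produces `Δ(y⁻¹)`)
turns its vanishing at `y` into orthogonality of `z ↦ g(y⁻¹ z) - Δ(y⁻¹) g(z y⁻¹)` to every
`K`-invariant `ψ`, and averaging over `K` once more gives the identity.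
-/

open MeasureTheory NNReal

/-- Convolution of two complex-valued functions on a group `G` with respect to a
measure `μ` : `(f ⋆ g)(x) = ∫ f(y) g(y⁻¹ x) dμ(y)`. -/
noncomputable def convolution' {G : Type*} [Group G] [MeasurableSpace G]
    (μ : Measure G) (f g : G → ℂ) : G → ℂ :=
  fun x => ∫ y, f y * g (y⁻¹ * x) ∂μ

open Function Set

section Analysis

variable {X Y E : Type*} [TopologicalSpace X] [TopologicalSpace Y] [MeasurableSpace Y]
  [OpensMeasurableSpace Y] [NormedAddCommGroup E] [NormedSpace ℝ E]

theorem continuous_integral_of_compact_support {μ : Measure Y} [IsFiniteMeasureOnCompacts μ]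
    {f : X → Y → E} {s : Set Y} (hs : IsCompact s) (hf : Continuous (uncurry f))
    (hfs : ∀ x y, y ∉ s → f x y = 0) :
    Continuous fun x => ∫ y, f x y ∂μ := by
  rw [← continuousOn_univ]
  exact continuousOn_integral_of_compact_support hs hf.continuousOn fun x y _ hy => hfs x y hy

theorem continuous_integral_of_compactSpace [CompactSpace Y] {μ : Measure Y}
    [IsFiniteMeasureOnCompacts μ] {f : X → Y → E} (hf : Continuous (uncurry f)) :
    Continuous fun x => ∫ y, f x y ∂μ :=
  continuous_integral_of_compact_support isCompact_univ hf fun _ _ hy => absurd (mem_univ _) hy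

theorem integral_integral_swap_of_support_subset [MeasurableSpace X] [OpensMeasurableSpace X]
    [R1Space X] [R1Space Y] {μ : Measure X} {ν : Measure Y} [IsFiniteMeasureOnCompacts μ]
    [IsFiniteMeasureOnCompacts ν] {f : X → Y → E} (hf : Continuous (uncurry f))
    {s : Set X} {t : Set Y} (hs : IsCompact s) (ht : IsCompact t)
    (hst : support (uncurry f) ⊆ s ×ˢ t) :
    ∫ x, ∫ y, f x y ∂ν ∂μ = ∫ y, ∫ x, f x y ∂μ ∂ν :=
  integral_integral_swap_of_hasCompactSupport hf <|
    HasCompactSupport.intro (hs.prod ht) fun _ hp => notMem_support.mp fun h => hp (hst h)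

theorem eq_zero_of_forall_integral_mul_eq_zero [MeasurableSpace X] [OpensMeasurableSpace X]
    [RegularSpace X] [LocallyCompactSpace X] (μ : Measure X) [μ.IsOpenPosMeasure]
    [IsFiniteMeasureOnCompacts μ] {u : X → ℂ} (hu : Continuous u)
    (h : ∀ φ : X → ℂ, Continuous φ → HasCompactSupport φ → ∫ x, φ x * u x ∂μ = 0) :
    u = 0 := by
  funext x₀
  obtain ⟨b, hb₁, -, hbs, hb₀₁⟩ := exists_continuous_one_zero_of_isCompact
    (isCompact_singleton (x := x₀)) isClosed_empty (disjoint_empty _)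
  -- Testing against `conj u · b` for a bump `b` at `x₀` gives the integrand `|u|² b ≥ 0`.
  set r : X → ℝ := fun x => Complex.normSq (u x) * b x
  have hrc : Continuous r := by fun_prop
  have hr : ∫ x, r x ∂μ = 0 := by
    have hbs' : HasCompactSupport fun x => ((b x : ℝ) : ℂ) := hbs.comp_left Complex.ofReal_zero
    have := h (fun x => (starRingEnd ℂ) (u x) * b x) (by fun_prop) hbs'.mul_left
    rw [← Complex.ofReal_inj, ← integral_complex_ofReal, Complex.ofReal_zero, ← this]
    congr 1 with x
    simp only [r, Complex.ofReal_mul, ← Complex.mul_conj]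
    ring
  by_contra hx
  refine (hrc.integral_pos_of_hasCompactSupport_nonneg_nonzero (μ := μ) hbs.mul_left
    (fun x => mul_nonneg (Complex.normSq_nonneg _) (hb₀₁ x).1) (x := x₀) ?_).ne' hr
  simpa [r, hb₁ rfl] using hx

theorem continuous_integral_mul_of_hasCompactSupport {μ : Measure Y} [IsFiniteMeasureOnCompacts μ]
    {F : X → Y → ℂ} {g : Y → ℂ} (hF : Continuous (uncurry F)) (hgc : Continuous g)
    (hgs : HasCompactSupport g) : Continuous fun x => ∫ z, F x z * g z ∂μ :=
  continuous_integral_of_compact_support hgs (by fun_prop) fun _ _ hz => by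
    rw [image_eq_zero_of_notMem_tsupport hz, mul_zero]

end Analysis

section Group

variable {G : Type*} [Group G] [MeasurableSpace G]

theorem integral_comp_mul_right_of_map_eq_smul [MeasurableMul G] (μ : Measure G) {y : G}
    {c : ℝ≥0} (hy : Measure.map (· * y) μ = c • μ) (F : G → ℂ) :
    ∫ z, F (z * y) ∂μ = (c : ℂ) * ∫ z, F z ∂μ := by
  calc ∫ z, F (z * y) ∂μ = ∫ z, F z ∂(Measure.map (· * y) μ) :=
        (integral_map_equiv (MeasurableEquiv.mulRight y) F).symm
    _ = (c : ℂ) * ∫ z, F z ∂μ := by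
        rw [hy, integral_smul_nnreal_measure, NNReal.smul_def, Complex.real_smul]

variable [TopologicalSpace G] [IsTopologicalGroup G] [BorelSpace G]
  (μ : Measure G) [μ.IsMulLeftInvariant] [IsFiniteMeasureOnCompacts μ]
  {f g ψ : G → ℂ}

theorem integral_mul_convolution' (hψc : Continuous ψ) (hψs : HasCompactSupport ψ)
    (hfc : Continuous f) (hfs : HasCompactSupport f) (hgc : Continuous g) :
    ∫ x, ψ x * convolution' μ f g x ∂μ = ∫ t, f t * ∫ z, ψ (t * z) * g z ∂μ ∂μ := by
  calc ∫ x, ψ x * convolution' μ f g x ∂μ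
      = ∫ x, ∫ t, ψ x * (f t * g (t⁻¹ * x)) ∂μ ∂μ := by
        simp only [convolution', integral_const_mul]
    _ = ∫ t, ∫ x, ψ x * (f t * g (t⁻¹ * x)) ∂μ ∂μ := by
        refine integral_integral_swap_of_support_subset (by fun_prop) hψs hfs ?_
        rintro ⟨x, t⟩ h
        exact ⟨subset_tsupport _ (left_ne_zero_of_mul h),
          subset_tsupport _ (left_ne_zero_of_mul (right_ne_zero_of_mul h))⟩
    _ = ∫ t, ∫ z, ψ (t * z) * (f t * g z) ∂μ ∂μ := by
        congr 1 with t
        rw [← integral_mul_left_eq_self _ t]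
        simp only [inv_mul_cancel_left]
    _ = ∫ t, f t * ∫ z, ψ (t * z) * g z ∂μ ∂μ := by
        simp only [← integral_const_mul, mul_left_comm (f _)]

theorem integral_mul_convolution'_swap (hψc : Continuous ψ) (hψs : HasCompactSupport ψ)
    (hfc : Continuous f) (hfs : HasCompactSupport f) (hgc : Continuous g)
    (hgs : HasCompactSupport g) :
    ∫ x, ψ x * convolution' μ g f x ∂μ = ∫ t, f t * ∫ z, ψ (z * t) * g z ∂μ ∂μ := by
  rw [integral_mul_convolution' μ hψc hψs hgc hgs hfc]
  calc ∫ t, g t * ∫ z, ψ (t * z) * f z ∂μ ∂μ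
      = ∫ t, ∫ z, g t * (ψ (t * z) * f z) ∂μ ∂μ := by simp only [integral_const_mul]
    _ = ∫ z, ∫ t, g t * (ψ (t * z) * f z) ∂μ ∂μ := by
        refine integral_integral_swap_of_support_subset (by fun_prop) hgs hfs ?_
        rintro ⟨t, z⟩ h
        exact ⟨subset_tsupport _ (left_ne_zero_of_mul h),
          subset_tsupport _ (right_ne_zero_of_mul (right_ne_zero_of_mul h))⟩
    _ = ∫ z, f z * ∫ t, ψ (t * z) * g t ∂μ ∂μ := by
        simp only [← integral_const_mul]
        congr 1 with z
        congr 1 with t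
        ring

theorem integral_mul_sub_eq_of_map_mul_right_eq_smul {y : G} {c : ℝ≥0}
    (hy : Measure.map (· * y) μ = c • μ) (hfc : Continuous f) (hfs : HasCompactSupport f)
    (hgc : Continuous g) :
    ∫ z, f z * (g (y⁻¹ * z) - (c : ℂ) * g (z * y⁻¹)) ∂μ
      = ∫ z, f (y * z) * g z ∂μ - ∫ z, f (z * y) * g z ∂μ := by
  have hleft : ∫ z, f z * g (y⁻¹ * z) ∂μ = ∫ z, f (y * z) * g z ∂μ := by
    rw [← integral_mul_left_eq_self (fun z => f z * g (y⁻¹ * z)) y]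
    simp only [inv_mul_cancel_left]
  have hright : ∫ z, f (z * y) * g z ∂μ = (c : ℂ) * ∫ z, f z * g (z * y⁻¹) ∂μ := by
    rw [← integral_comp_mul_right_of_map_eq_smul μ hy]
    simp only [mul_inv_cancel_right]
  have hint : ∀ F : G → ℂ, Continuous F → Integrable (fun z => f z * F z) μ :=
    fun F hF => (hfc.mul hF).integrable_of_hasCompactSupport hfs.mul_right
  simp only [mul_sub]
  rw [integral_sub (hint _ (by fun_prop)) (hint _ (by fun_prop)), hleft, hright,
    ← integral_const_mul]
  simp only [mul_left_comm (c : ℂ)]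

end Group

section OrbitAverage

open scoped Pointwise

variable {X K : Type*} [Group K] [MulAction K X] {φ w : X → ℂ}

theorem mem_univ_smul_tsupport [TopologicalSpace X] {k : K} {x : X} (h : φ (k⁻¹ • x) ≠ 0) :
    x ∈ (univ : Set K) • tsupport φ :=
  ⟨k, mem_univ k, k⁻¹ • x, subset_tsupport φ h, smul_inv_smul k x⟩

variable [MeasurableSpace K] (ν : Measure K)

/-- The inverse makes `orbitAverage ν` adjoint to `w ↦ ∫ k, w (k • ·) ∂ν` for a `K`-invariant
measure on `X`. -/
noncomputable def orbitAverage (φ : X → ℂ) (x : X) : ℂ :=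
  ∫ k, φ (k⁻¹ • x) ∂ν

theorem orbitAverage_smul [MeasurableMul K] [ν.IsMulLeftInvariant] (k₀ : K) (x : X) :
    orbitAverage ν φ (k₀ • x) = orbitAverage ν φ x := by
  simpa only [orbitAverage, mul_inv_rev, inv_mul_cancel_right, mul_smul] using
    (integral_mul_left_eq_self (fun k => φ ((k⁻¹ * k₀) • x)) k₀ (μ := ν)).symm

variable [TopologicalSpace X] [TopologicalSpace K] [CompactSpace K] [ContinuousSMul K X]

theorem hasCompactSupport_orbitAverage [R1Space X] (hφ : HasCompactSupport φ) :
    HasCompactSupport (orbitAverage ν φ) := by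
  refine HasCompactSupport.intro ((isCompact_univ (X := K)).smul_set hφ) fun x hx => ?_
  have hφx : ∀ k : K, φ (k⁻¹ • x) = 0 := fun k => not_not.mp fun h => hx (mem_univ_smul_tsupport h)
  simp [orbitAverage, hφx]

variable [IsTopologicalGroup K] [BorelSpace K] [IsFiniteMeasure ν]

theorem continuous_orbitAverage (hφ : Continuous φ) : Continuous (orbitAverage ν φ) :=
  continuous_integral_of_compactSpace (by fun_prop)

variable [MeasurableSpace X] [BorelSpace X] (μ : Measure X) [IsFiniteMeasureOnCompacts μ]
  [SMulInvariantMeasure K X μ]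

theorem integral_orbitAverage_mul [R1Space X] (hφc : Continuous φ) (hφs : HasCompactSupport φ)
    (hw : Continuous w) :
    ∫ x, orbitAverage ν φ x * w x ∂μ = ∫ x, φ x * ∫ k, w (k • x) ∂ν ∂μ := by
  calc ∫ x, orbitAverage ν φ x * w x ∂μ
      = ∫ x, ∫ k, φ (k⁻¹ • x) * w x ∂ν ∂μ := by simp only [orbitAverage, integral_mul_const]
    _ = ∫ k, ∫ x, φ (k⁻¹ • x) * w x ∂μ ∂ν :=
        integral_integral_swap_of_support_subset (by fun_prop)
          (isCompact_univ.smul_set hφs) isCompact_univ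
          fun _ h => ⟨mem_univ_smul_tsupport (left_ne_zero_of_mul h), mem_univ _⟩
    _ = ∫ k, ∫ x, φ x * w (k • x) ∂μ ∂ν := by
        congr 1 with k
        rw [← integral_smul_eq_self _ (g := k)]
        simp only [inv_smul_smul]
    _ = ∫ x, φ x * ∫ k, w (k • x) ∂ν ∂μ := by
        simp only [← integral_const_mul]
        exact integral_integral_swap_of_support_subset (by fun_prop) isCompact_univ hφs
          fun _ h => ⟨mem_univ _, subset_tsupport _ (left_ne_zero_of_mul h)⟩

theorem integral_smul_eq_zero_of_forall_invariant [RegularSpace X] [LocallyCompactSpace X]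
    [μ.IsOpenPosMeasure] [ν.IsMulLeftInvariant] (hw : Continuous w)
    (h : ∀ f : X → ℂ, Continuous f → HasCompactSupport f → (∀ (k : K) (x : X), f (k • x) = f x) →
      ∫ x, f x * w x ∂μ = 0) (x : X) :
    ∫ k, w (k • x) ∂ν = 0 := by
  refine congrFun (eq_zero_of_forall_integral_mul_eq_zero μ
    (continuous_integral_of_compactSpace (f := fun x k => w (k • x)) (by fun_prop))
      fun φ hφc hφs => ?_) x
  rw [← integral_orbitAverage_mul ν μ hφc hφs hw]
  exact h _ (continuous_orbitAverage ν hφc) (hasCompactSupport_orbitAverage ν hφs)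
    (orbitAverage_smul ν)

end OrbitAverage

section Central

variable {G K : Type*} [Group G] [TopologicalSpace G] [IsTopologicalGroup G]
  [LocallyCompactSpace G] [MeasurableSpace G] [BorelSpace G] (μ : Measure G) [μ.IsHaarMeasure]
  [Group K] [TopologicalSpace K] [IsTopologicalGroup K] [CompactSpace K] [MeasurableSpace K]
  [BorelSpace K] [MulDistribMulAction K G] [ContinuousSMul K G] [SMulInvariantMeasure K G μ]
  {f g : G → ℂ}

theorem integral_comp_mul_left_eq_integral_comp_mul_right (hgc : Continuous g)
    (hgs : HasCompactSupport g) (hginv : ∀ (k : K) (x : G), g (k • x) = g x)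
    (hcomm : ∀ f : G → ℂ, Continuous f → HasCompactSupport f →
      (∀ (k : K) (x : G), f (k • x) = f x) → convolution' μ f g =ᵐ[μ] convolution' μ g f)
    (hfc : Continuous f) (hfs : HasCompactSupport f) (hfinv : ∀ (k : K) (x : G), f (k • x) = f x)
    (y : G) :
    ∫ z, f (y * z) * g z ∂μ = ∫ z, f (z * y) * g z ∂μ := by
  set u : G → ℂ := fun t => ∫ z, f (t * z) * g z ∂μ - ∫ z, f (z * t) * g z ∂μ
  have hleft_cont : Continuous fun t => ∫ z, f (t * z) * g z ∂μ :=
    continuous_integral_mul_of_hasCompactSupport (F := fun t z => f (t * z)) (by fun_prop) hgc hgs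
  have hright_cont : Continuous fun t => ∫ z, f (z * t) * g z ∂μ :=
    continuous_integral_mul_of_hasCompactSupport (F := fun t z => f (z * t)) (by fun_prop) hgc hgs
  have hu_smul : ∀ (k : K) (t : G), u (k • t) = u t := by
    intro k t
    simp only [u]
    congr 1 <;> rw [← integral_smul_eq_self _ (g := k)] <;> simp only [← smul_mul', hfinv, hginv]
  have hu_orth : ∀ φ : G → ℂ, Continuous φ → HasCompactSupport φ →
      (∀ (k : K) (x : G), φ (k • x) = φ x) → ∫ t, φ t * u t ∂μ = 0 := by
    intro φ hφc hφs hφinv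
    have hint : ∀ F : G → ℂ, Continuous F → Integrable (fun t => φ t * F t) μ :=
      fun F hF => (hφc.mul hF).integrable_of_hasCompactSupport hφs.mul_right
    simp only [u, mul_sub]
    rw [integral_sub (hint _ hleft_cont) (hint _ hright_cont),
      ← integral_mul_convolution' μ hfc hfs hφc hφs hgc,
      ← integral_mul_convolution'_swap μ hfc hfs hφc hφs hgc hgs,
      integral_congr_ae ((hcomm φ hφc hφs hφinv).mono fun x hx => by rw [hx]), sub_self]
  let ν : Measure K := Measure.haarMeasure ⊤
  have : IsProbabilityMeasure ν := ⟨Measure.haarMeasure_self⟩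
  have hu_avg := integral_smul_eq_zero_of_forall_invariant ν μ (w := u)
    (hleft_cont.sub hright_cont) hu_orth y
  simp only [hu_smul, integral_const, probReal_univ, one_smul] at hu_avg
  exact sub_eq_zero.mp hu_avg

end Central

theorem centralFunction_modular_identity_general
    {G : Type*} [Group G] [TopologicalSpace G] [IsTopologicalGroup G]
    [LocallyCompactSpace G] [MeasurableSpace G] [BorelSpace G]
    (μ : Measure G) [μ.IsHaarMeasure]
    {K : Type*} [Group K] [TopologicalSpace K] [IsTopologicalGroup K]
    [CompactSpace K] [MeasurableSpace K] [BorelSpace K]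
    (ν : Measure K) [ν.IsHaarMeasure] [IsProbabilityMeasure ν]
    [MulDistribMulAction K G] [ContinuousSMul K G] [SMulInvariantMeasure K G μ]
    -- `Δ` is the modular function of `G` : `μ(S y) = Δ(y) μ(S)`,
    -- i.e. the pushforward of `μ` under right translation by `y` is `Δ(y⁻¹) • μ`.
    (Δ : G → ℝ≥0) (hΔ : ∀ y : G, Measure.map (fun x => x * y) μ = Δ y⁻¹ • μ)
    (g : G → ℂ) (hgc : Continuous g) (hgs : HasCompactSupport g)
    (hginv : ∀ (k : K) (x : G), g (k • x) = g x)
    (hcomm : ∀ f : G → ℂ, Continuous f → HasCompactSupport f →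
      (∀ (k : K) (x : G), f (k • x) = f x) →
      convolution' μ f g =ᵐ[μ] convolution' μ g f) :
    ∀ x y : G,
      ∫ k : K, (g (y⁻¹ * (k • x)) - ((Δ y⁻¹ : ℝ) : ℂ) * g ((k • x) * y⁻¹)) ∂ν = 0 := by
  intro x y
  refine integral_smul_eq_zero_of_forall_invariant ν μ
    (w := fun z => g (y⁻¹ * z) - ((Δ y⁻¹ : ℝ) : ℂ) * g (z * y⁻¹)) (by fun_prop)
    (fun f hfc hfs hfinv => ?_) x
  rw [integral_mul_sub_eq_of_map_mul_right_eq_smul μ (hΔ y) hfc hfs hgc,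
    integral_comp_mul_left_eq_integral_comp_mul_right μ hgc hgs hginv hcomm hfc hfs hfinv y,
    sub_self]

/-- Let `g` be a continuous compactly supported `K`-invariant function that commutes
(a.e.) under convolution with every `K`-invariant continuous compactly supported `f`.
Then `∫_K [g(y⁻¹(k·x)) − Δ(y⁻¹) g((k·x)y⁻¹)] dk = 0` for all `x, y ∈ G`,
where `Δ` is the modular function of `G`. -/
theorem centralFunction_modular_identity
    {G : Type*} [Group G] [TopologicalSpace G] [IsTopologicalGroup G]
    [LocallyCompactSpace G] [T2Space G] [MeasurableSpace G] [BorelSpace G]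
    (μ : Measure G) [μ.IsHaarMeasure]
    {K : Type*} [Group K] [TopologicalSpace K] [IsTopologicalGroup K]
    [CompactSpace K] [T2Space K] [MeasurableSpace K] [BorelSpace K]
    (ν : Measure K) [ν.IsHaarMeasure] [IsProbabilityMeasure ν]
    [MulDistribMulAction K G] [ContinuousSMul K G] [SMulInvariantMeasure K G μ]
    -- `Δ` is the modular function of `G` : `μ(S y) = Δ(y) μ(S)`,
    -- i.e. the pushforward of `μ` under right translation by `y` is `Δ(y⁻¹) • μ`.
    (Δ : G → ℝ≥0) (hΔ : ∀ y : G, Measure.map (fun x => x * y) μ = Δ y⁻¹ • μ)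
    (g : G → ℂ) (hgc : Continuous g) (hgs : HasCompactSupport g)
    (hginv : ∀ (k : K) (x : G), g (k • x) = g x)
    (hcomm : ∀ f : G → ℂ, Continuous f → HasCompactSupport f →
      (∀ (k : K) (x : G), f (k • x) = f x) →
      convolution' μ f g =ᵐ[μ] convolution' μ g f) :
    ∀ x y : G,
      ∫ k : K, (g (y⁻¹ * (k • x)) - ((Δ y⁻¹ : ℝ) : ℂ) * g ((k • x) * y⁻¹)) ∂ν = 0 :=
  centralFunction_modular_identity_general μ ν Δ hΔ g hgc hgs hginv hcomm
end

section
/- If (G,K) is a quasi-Gelfand pair of order p, then for all x₁, x₂, …, x_{p+1} ∈ G there exist m ∈ {1,…,p} and a permutation σ of {1,…,p+1} satisfying σ(m) = p+1, σ(1) < σ(2) < … < σ(m), and σ(m+1) > σ(m+2) > … > σ(p+1), such that the product x₁x₂⋯x_{p+1} belongs to the set product (K·x_{σ(1)})(K·x_{σ(2)})⋯(K·x_{σ(p+1)}), where K·x = {k·x : k ∈ K} denotes the K-orbit of x and the product of subsets A₁⋯A_q of G is {a₁⋯a_q : aᵢ ∈ Aᵢ}. -/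
/-!
Take nonnegative `K`-invariant bumps `φ_j` with `φ_j (x_j) > 0`, supported in small
neighbourhoods `L_j` of the orbits `K • x_j`. Expanding `[φ₀, [φ₁, …, [φ_{p-1}, φ_p]…]]` gives
one monomial `φ_A ⋆ φ_p ⋆ φ_{reverse B}` for each split of `0, …, p-1` into complementary
subsequences `A` and `B`, supported in the corresponding product of the `L_j`. For `B ≠ []` the
word `A, p, reverse B` is a permutation `σ` as in the statement. So if `x₀ ⋯ x_p` lay in none of
the orbit products, then for small enough `L_j` it would avoid the supports of all monomials but
the leading one `φ₀ ⋆ ⋯ ⋆ φ_p`, which is continuous and positive at `x₀ ⋯ x_p`: the bracket would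
not vanish on a neighbourhood of `x₀ ⋯ x_p`, contradicting nilpotency.
-/

open MeasureTheory Pointwise

/-- The iterated Lie bracket `[f₁, [f₂, …, [f_q, g]…]]` where the bracket is
`[f, h] = f ⋆ h - h ⋆ f`, `l = [f₁, …, f_q]`. -/
noncomputable def iterBracket {G : Type*} [Group G] [MeasurableSpace G]
    (μ : Measure G) (l : List (G → ℂ)) (g : G → ℂ) : G → ℂ :=
  l.foldr (fun f h => convolution' μ f h - convolution' μ h f) g

open Filter Function Topology

section BracketSplits

variable {α : Type*}

/-- The monomials of `[f_{a₁}, [f_{a₂}, …, [f_{a_q}, g]…]]` are `f_A ⋆ g ⋆ f_{reverse B}`, one for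
each `(A, B) ∈ bracketSplits [a₁, …, a_q]`. -/
def bracketSplits : List α → List (List α × List α)
  | [] => [([], [])]
  | a :: l => (bracketSplits l).map (fun s => (a :: s.1, s.2)) ++
      (bracketSplits l).map (fun s => (s.1, a :: s.2))

variable {a : α} {l : List α} {s : List α × List α}

theorem cons_fst_mem_bracketSplits (hs : s ∈ bracketSplits l) :
    (a :: s.1, s.2) ∈ bracketSplits (a :: l) :=
  List.mem_append_left _ (List.mem_map_of_mem hs)

theorem cons_snd_mem_bracketSplits (hs : s ∈ bracketSplits l) :
    (s.1, a :: s.2) ∈ bracketSplits (a :: l) :=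
  List.mem_append_right _ (List.mem_map_of_mem hs)

theorem sublist_perm_of_mem_bracketSplits :
    ∀ {l : List α} {s : List α × List α}, s ∈ bracketSplits l →
      s.1.Sublist l ∧ s.2.Sublist l ∧ (s.1 ++ s.2).Perm l
  | [], s, hs => by simp_all [bracketSplits]
  | a :: l, s, hs => by
    simp only [bracketSplits, List.mem_append, List.mem_map] at hs
    rcases hs with ⟨s, hs, rfl⟩ | ⟨s, hs, rfl⟩ <;>
      obtain ⟨hA, hB, hAB⟩ := sublist_perm_of_mem_bracketSplits hs
    · exact ⟨hA.cons_cons a, hB.cons a, hAB.cons a⟩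
    · exact ⟨hA.cons a, hB.cons_cons a, List.perm_middle.trans (hAB.cons a)⟩

end BracketSplits

theorem exists_perm_ofFn_eq {n : ℕ} {u : List (Fin n)} (hu : u.Perm (List.finRange n)) :
    ∃ σ : Equiv.Perm (Fin n), List.ofFn σ = u := by
  classical
  have hlen : u.length = n := hu.length_eq.trans List.length_finRange
  let e := (hu.nodup_iff.2 (List.nodup_finRange n)).getEquivOfForallMemList u
    fun i => hu.mem_iff.2 (List.mem_finRange i)
  exact ⟨(finCongr hlen).symm.trans e, List.ext_getElem (by simp [hlen]) fun i _ _ => by simp [e]⟩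

theorem exists_perm_of_mem_bracketSplits {p : ℕ} {s : List (Fin (p + 1)) × List (Fin (p + 1))}
    (hs : s ∈ bracketSplits ((List.finRange p).map Fin.castSucc)) (hs₂ : s.2 ≠ []) :
    ∃ m : ℕ, 1 ≤ m ∧ m ≤ p ∧ ∃ σ : Equiv.Perm (Fin (p + 1)),
      (∀ i : Fin (p + 1), (i : ℕ) + 1 = m → σ i = Fin.last p) ∧
      (∀ i j : Fin (p + 1), (i : ℕ) < (j : ℕ) → (j : ℕ) < m → σ i < σ j) ∧
      (∀ i j : Fin (p + 1), m ≤ (i : ℕ) → (i : ℕ) < (j : ℕ) → σ j < σ i) ∧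
      List.ofFn σ = s.1 ++ Fin.last p :: s.2.reverse := by
  obtain ⟨A, B⟩ := s
  obtain ⟨hA, hB, hAB⟩ := sublist_perm_of_mem_bracketSplits hs
  dsimp only at hA hB hAB hs₂ ⊢
  have hsorted : ((List.finRange p).map Fin.castSucc).Pairwise (· < ·) :=
    (List.pairwise_lt_finRange p).map _ fun _ _ => Fin.castSucc_lt_castSucc_iff.2
  have hlen : A.length + B.length = p := by simpa using hAB.length_eq
  have hB₀ : 0 < B.length := List.length_pos_iff.2 hs₂
  have hperm : (A ++ Fin.last p :: B.reverse).Perm (List.finRange (p + 1)) := by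
    rw [List.finRange_succ_last]
    exact List.perm_middle.trans <| (((List.reverse_perm B).append_left A).trans hAB).cons _
      |>.trans (List.perm_append_singleton _ _).symm
  obtain ⟨σ, hσ⟩ := exists_perm_ofFn_eq hperm
  have hσu (i : Fin (p + 1)) :
      σ i = (A ++ [Fin.last p] ++ B.reverse)[(i : ℕ)]'(by simp; omega) := by
    simp only [List.append_assoc, List.singleton_append, ← hσ, List.getElem_ofFn]
  have hlt_last (a : Fin (p + 1)) (ha : a ∈ A) : a < Fin.last p := by
    obtain ⟨k, -, rfl⟩ := List.mem_map.1 (hA.subset ha)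
    exact Fin.castSucc_lt_last k
  have hinc : (A ++ [Fin.last p]).Pairwise (· < ·) :=
    List.pairwise_append.2 ⟨hsorted.sublist hA, List.pairwise_singleton _ _,
      fun a ha b hb => List.eq_of_mem_singleton hb ▸ hlt_last a ha⟩
  have hdec : B.reverse.Pairwise (· > ·) := List.pairwise_reverse.2 (hsorted.sublist hB)
  refine ⟨A.length + 1, by omega, by omega, σ, fun i hi => ?_, fun i j hij hj => ?_,
    fun i j hi hij => ?_, hσ⟩
  · simp [hσu, show (i : ℕ) = A.length by omega]
  · have hjP : (j : ℕ) < (A ++ [Fin.last p]).length := by simp; omega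
    rw [hσu, hσu, List.getElem_append_left (hij.trans hjP), List.getElem_append_left hjP]
    exact List.pairwise_iff_getElem.1 hinc _ _ _ _ hij
  · have hiP : (A ++ [Fin.last p]).length ≤ i := by simp; omega
    rw [hσu, hσu, List.getElem_append_right hiP, List.getElem_append_right (hiP.trans hij.le)]
    exact List.pairwise_iff_getElem.1 hdec _ _ _ _ (Nat.sub_lt_sub_right hiP hij)

section ListProd

variable {G : Type*} [Group G] [TopologicalSpace G] [IsTopologicalGroup G]

theorem isCompact_list_prod : ∀ {l : List (Set G)}, (∀ s ∈ l, IsCompact s) → IsCompact l.prod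
  | [], _ => by simp
  | s :: l, h => by
    rw [List.prod_cons]
    exact (h s List.mem_cons_self).mul
      (isCompact_list_prod fun t ht => h t (List.mem_cons_of_mem _ ht))

theorem eventually_smallSets_list_prod_mul_subset :
    ∀ {l : List (Set G)}, (∀ s ∈ l, IsCompact s) → ∀ {V : Set G}, IsOpen V → l.prod ⊆ V →
      ∀ᶠ N in (𝓝 (1 : G)).smallSets, (l.map (· * N)).prod ⊆ V
  | [], _, V, _, hV => .of_forall fun N => by simpa using hV
  | s :: l, hl, V, hVo, hV => by
    have hs : IsCompact s := hl s List.mem_cons_self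
    have hl' : ∀ t ∈ l, IsCompact t := fun t ht => hl t (List.mem_cons_of_mem _ ht)
    obtain ⟨U, W, hUo, hWo, hsU, hlW, hUW⟩ := generalized_tube_lemma hs (isCompact_list_prod hl')
      (hVo.preimage continuous_mul) fun q hq => hV (by simpa using Set.mul_mem_mul hq.1 hq.2)
    obtain ⟨N₀, hN₀, hsN₀⟩ := compact_open_separated_mul_right hs hUo hsU
    have hhead : ∀ᶠ N in (𝓝 (1 : G)).smallSets, s * N ⊆ U :=
      eventually_smallSets.2 ⟨N₀, hN₀, fun N hN => (Set.mul_subset_mul_left hN).trans hsN₀⟩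
    filter_upwards [hhead, eventually_smallSets_list_prod_mul_subset hl' hWo hlW] with N h₁ h₂
    rw [List.map_cons, List.prod_cons]
    rintro _ ⟨y, hy, w, hw, rfl⟩
    exact hUW (Set.mk_mem_prod (h₁ hy) (h₂ hw))

theorem eventually_smallSets_notMem_prod_map_mul [T1Space G] {ι : Type*} {C : ι → Set G}
    (hC : ∀ i, IsCompact (C i)) {z : G} {w : List ι} (hz : z ∉ (w.map C).prod) :
    ∀ᶠ N in (𝓝 (1 : G)).smallSets, z ∉ (w.map (C · * N)).prod := by
  filter_upwards [eventually_smallSets_list_prod_mul_subset (List.forall_mem_map.2 fun i _ => hC i)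
    isClosed_singleton.isOpen_compl (Set.subset_compl_singleton_iff.2 hz)] with N hN
  simpa [List.map_map, Function.comp_def] using hN

end ListProd

structure IsBump {X : Type*} [TopologicalSpace X] (f : X → ℝ) : Prop where
  continuous : Continuous f
  hasCompactSupport : HasCompactSupport f
  nonneg : 0 ≤ f

theorem IsBump.integrable_ofReal {X : Type*} [TopologicalSpace X] [MeasurableSpace X]
    [OpensMeasurableSpace X] {μ : Measure X} [IsFiniteMeasureOnCompacts μ] {f : X → ℝ}
    (hf : IsBump f) : Integrable (fun x => (f x : ℂ)) μ :=
  (Complex.continuous_ofReal.comp hf.continuous).integrable_of_hasCompactSupport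
    (hf.hasCompactSupport.comp_left Complex.ofReal_zero)

section Convolution

variable {G : Type*} [Group G] [MeasurableSpace G] (μ : Measure G)

/-- The real-valued `convolution'`, in which positivity of the leading monomial can be argued. -/
noncomputable def realConv (f g : G → ℝ) : G → ℝ := fun x => ∫ y, f y * g (y⁻¹ * x) ∂μ

noncomputable def realConvChain (l : List (G → ℝ)) (g : G → ℝ) : G → ℝ := l.foldr (realConv μ) g

noncomputable def realBracket (l : List (G → ℝ)) (g : G → ℝ) : G → ℝ :=
  l.foldr (fun f h => realConv μ f h - realConv μ h f) g

variable {μ}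

@[simp] theorem realConvChain_cons (f : G → ℝ) (l : List (G → ℝ)) (g : G → ℝ) :
    realConvChain μ (f :: l) g = realConv μ f (realConvChain μ l g) := rfl

@[simp] theorem realBracket_cons (f : G → ℝ) (l : List (G → ℝ)) (g : G → ℝ) :
    realBracket μ (f :: l) g =
      realConv μ f (realBracket μ l g) - realConv μ (realBracket μ l g) f := rfl

theorem support_realConv_subset (f g : G → ℝ) :
    support (realConv μ f g) ⊆ support f * support g := by
  intro x hx
  by_contra hxfg
  refine hx (integral_eq_zero_of_ae (.of_forall fun y => ?_))
  by_contra hy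
  exact hxfg ⟨y, left_ne_zero_of_mul hy, y⁻¹ * x, right_ne_zero_of_mul hy, mul_inv_cancel_left y x⟩

variable {ι : Type*} {φ : ι → G → ℝ} {L : ι → Set G}

theorem exists_mem_prod_of_realBracket_ne_zero (hφL : ∀ i, support (φ i) ⊆ L i) (g : ι) :
    ∀ (l : List ι) {w : G}, realBracket μ (l.map φ) (φ g) w ≠ 0 →
      ∃ s ∈ bracketSplits l, w ∈ ((s.1 ++ g :: s.2.reverse).map L).prod
  | [], w, hw => ⟨([], []), List.mem_singleton_self _, by simpa using hφL g hw⟩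
  | i :: l, w, hw => by
    have hw' : realConv μ (φ i) (realBracket μ (l.map φ) (φ g)) w ≠ 0 ∨
        realConv μ (realBracket μ (l.map φ) (φ g)) (φ i) w ≠ 0 := by
      by_contra! h
      exact hw (by simp [h])
    rcases hw' with hw' | hw'
    · obtain ⟨y, hy, v, hv, rfl⟩ := support_realConv_subset _ _ hw'
      obtain ⟨s, hs, hvs⟩ := exists_mem_prod_of_realBracket_ne_zero hφL g l hv
      exact ⟨_, cons_fst_mem_bracketSplits hs, by simpa using Set.mul_mem_mul (hφL i hy) hvs⟩
    · obtain ⟨v, hv, y, hy, rfl⟩ := support_realConv_subset _ _ hw'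
      obtain ⟨s, hs, hvs⟩ := exists_mem_prod_of_realBracket_ne_zero hφL g l hv
      exact ⟨_, cons_snd_mem_bracketSplits hs,
        by simpa [mul_assoc] using Set.mul_mem_mul hvs (hφL i hy)⟩

theorem realBracket_eq_realConvChain (hφL : ∀ i, support (φ i) ⊆ L i) (g : ι) :
    ∀ (l : List ι) {w : G},
      (∀ s ∈ bracketSplits l, s.2 ≠ [] → w ∉ ((s.1 ++ g :: s.2.reverse).map L).prod) →
      realBracket μ (l.map φ) (φ g) w = realConvChain μ (l.map φ) (φ g) w
  | [], w, _ => rfl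
  | i :: l, w, hw => by
    have hright : realConv μ (realBracket μ (l.map φ) (φ g)) (φ i) w = 0 := by
      by_contra hne
      obtain ⟨v, hv, y, hy, rfl⟩ := support_realConv_subset _ _ hne
      obtain ⟨s, hs, hvs⟩ := exists_mem_prod_of_realBracket_ne_zero hφL g l hv
      exact hw _ (cons_snd_mem_bracketSplits hs) (List.cons_ne_nil _ _)
        (by simpa [mul_assoc] using Set.mul_mem_mul hvs (hφL i hy))
    have hleft : realConv μ (φ i) (realBracket μ (l.map φ) (φ g)) w =
        realConv μ (φ i) (realConvChain μ (l.map φ) (φ g)) w := by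
      refine integral_congr_ae (.of_forall fun y => ?_)
      by_cases hy : φ i y = 0
      · simp [hy]
      · refine congrArg (φ i y * ·) (realBracket_eq_realConvChain hφL g l
          fun s hs hs₂ hmem => hw _ (cons_fst_mem_bracketSplits hs) hs₂ ?_)
        simpa using Set.mul_mem_mul (hφL i hy) hmem
    simp [hleft, hright]

theorem convolution'_ofReal (f g : G → ℝ) :
    convolution' μ (fun x => (f x : ℂ)) (fun x => (g x : ℂ)) = fun x => (realConv μ f g x : ℂ) := by
  funext x
  simp only [convolution', realConv, ← Complex.ofReal_mul]
  exact integral_ofReal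

theorem iterBracket_ofReal : ∀ (l : List (G → ℝ)) (g : G → ℝ),
    iterBracket μ (l.map fun f x => (f x : ℂ)) (fun x => (g x : ℂ)) =
      fun x => (realBracket μ l g x : ℂ)
  | [], _ => rfl
  | f :: l, g => by
    have ih := iterBracket_ofReal l g
    simp only [iterBracket, List.map_cons, List.foldr_cons] at ih ⊢
    rw [ih, convolution'_ofReal, convolution'_ofReal]
    funext x
    simp

variable [TopologicalSpace G] [IsTopologicalGroup G] [BorelSpace G]

theorem IsBump.realConv [IsFiniteMeasureOnCompacts μ] {f g : G → ℝ} (hf : IsBump f)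
    (hg : IsBump g) : IsBump (realConv μ f g) where
  continuous := continuousOn_univ.1 <| continuousOn_integral_of_compact_support
    hf.hasCompactSupport.isCompact
    ((hf.continuous.comp continuous_snd).mul
      (hg.continuous.comp (continuous_snd.inv.mul continuous_fst))).continuousOn
    fun _ _ _ hy => by simp [image_eq_zero_of_notMem_tsupport hy]
  hasCompactSupport := .of_support_subset_isCompact
    (hf.hasCompactSupport.isCompact.mul hg.hasCompactSupport.isCompact)
    ((support_realConv_subset f g).trans
      (Set.mul_subset_mul (subset_tsupport f) (subset_tsupport g)))
  nonneg _ := integral_nonneg fun _ => mul_nonneg (hf.nonneg _) (hg.nonneg _)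

theorem realConv_mul_pos [IsFiniteMeasureOnCompacts μ] [μ.IsOpenPosMeasure] {f g : G → ℝ}
    (hf : IsBump f) (hg : IsBump g) {a b : G} (ha : 0 < f a) (hb : 0 < g b) :
    0 < realConv μ f g (a * b) := by
  have hcont : Continuous fun y => f y * g (y⁻¹ * (a * b)) :=
    hf.continuous.mul (hg.continuous.comp (continuous_inv.mul continuous_const))
  refine integral_pos_of_integrable_nonneg_nonzero (x := a) hcont
    (hcont.integrable_of_hasCompactSupport hf.hasCompactSupport.mul_right)
    (fun y => mul_nonneg (hf.nonneg _) (hg.nonneg _)) ?_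
  simpa using (mul_pos ha hb).ne'

theorem IsBump.realConvChain [IsFiniteMeasureOnCompacts μ] (hφ : ∀ i, IsBump (φ i)) (g : ι) :
    ∀ l : List ι, IsBump (realConvChain μ (l.map φ) (φ g))
  | [] => hφ g
  | i :: l => (hφ i).realConv (IsBump.realConvChain hφ g l)

theorem realConvChain_pos [IsFiniteMeasureOnCompacts μ] [μ.IsOpenPosMeasure]
    (hφ : ∀ i, IsBump (φ i)) {x : ι → G} (hx : ∀ i, 0 < φ i (x i)) (g : ι) :
    ∀ l : List ι, 0 < realConvChain μ (l.map φ) (φ g) ((l.map x).prod * x g)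
  | [] => by simpa [realConvChain] using hx g
  | i :: l => by
    rw [List.map_cons, List.map_cons, List.prod_cons, mul_assoc, realConvChain_cons]
    exact realConv_mul_pos (hφ i) (IsBump.realConvChain hφ g l) (hx i)
      (realConvChain_pos hφ hx g l)

end Convolution

section InvariantBump

variable {K X : Type*} [Group K] [TopologicalSpace K] [CompactSpace K] [TopologicalSpace X]
  [MulAction K X] [ContinuousSMul K X]

theorem isOpen_setOf_forall_smul_mem {W : Set X} (hW : IsOpen W) :
    IsOpen {x | ∀ k : K, k • x ∈ W} := by
  have hcompl : {x | ∀ k : K, k • x ∈ W}ᶜ = Prod.snd '' {q : K × X | q.1 • q.2 ∉ W} := by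
    ext; simp
  rw [← isClosed_compl_iff, hcompl]
  exact isClosedMap_snd_of_compactSpace _ (hW.isClosed_compl.preimage continuous_smul)

variable [IsTopologicalGroup K] [MeasurableSpace K] [BorelSpace K] [LocallyCompactSpace X]
  [RegularSpace X]

theorem exists_isBump_smul_invariant (ν : Measure K) [ν.IsHaarMeasure] {x₀ : X} {W : Set X}
    (hW : IsOpen W) (hx₀ : ∀ k : K, k • x₀ ∈ W) :
    ∃ φ : X → ℝ, IsBump φ ∧ (∀ (k : K) (x : X), φ (k • x) = φ x) ∧ 0 < φ x₀ ∧ support φ ⊆ W := by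
  obtain ⟨f, hf₁, hf₀, hfc, hf01⟩ := exists_continuous_one_zero_of_isCompact isCompact_singleton
    (isOpen_setOf_forall_smul_mem hW).isClosed_compl
    (Set.disjoint_compl_right_iff_subset.2 (Set.singleton_subset_iff.2 hx₀))
  have hcont : Continuous fun q : X × K => f (q.2⁻¹ • q.1) :=
    f.continuous.comp (continuous_snd.inv.smul continuous_fst)
  have hsupp : support (fun x => ∫ k, f (k⁻¹ • x) ∂ν) ⊆
      (fun q : K × X => q.1 • q.2) '' (Set.univ ×ˢ support f) := by
    intro x hx
    obtain ⟨k, hk⟩ : ∃ k : K, f (k⁻¹ • x) ≠ 0 := by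
      by_contra! h
      exact hx (by simp [h])
    exact ⟨(k, k⁻¹ • x), ⟨trivial, hk⟩, smul_inv_smul k x⟩
  refine ⟨fun x => ∫ k, f (k⁻¹ • x) ∂ν, ⟨?_, ?_, ?_⟩, fun k₀ x => ?_, ?_, ?_⟩
  · exact continuousOn_univ.1 <| continuousOn_integral_of_compact_support isCompact_univ
      hcont.continuousOn fun _ _ _ hk => absurd trivial hk
  · exact .of_support_subset_isCompact ((isCompact_univ.prod hfc).image continuous_smul)
      (hsupp.trans (Set.image_mono (Set.prod_mono subset_rfl (subset_tsupport f))))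
  · exact fun x => integral_nonneg fun k => (hf01 _).1
  · dsimp only
    rw [← integral_mul_left_eq_self _ k₀]
    simp [mul_smul]
  · have hcont₀ : Continuous fun k : K => f (k⁻¹ • x₀) := hcont.comp (Continuous.prodMk_right x₀)
    refine integral_pos_of_integrable_nonneg_nonzero (x := 1) hcont₀
      (hcont₀.integrable_of_hasCompactSupport (.of_compactSpace _)) (fun k => (hf01 _).1) ?_
    simp [hf₁ rfl]
  · refine hsupp.trans ?_
    rintro _ ⟨⟨k, y⟩, ⟨-, hy⟩, rfl⟩
    by_contra hkyW
    exact hy (hf₀ fun hyU => hkyW (hyU k))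

end InvariantBump

theorem not_iterBracket_ofReal_ae_eq_zero {G : Type*} [Group G] [TopologicalSpace G]
    [IsTopologicalGroup G] [T2Space G] [MeasurableSpace G] [BorelSpace G] {μ : Measure G}
    [IsFiniteMeasureOnCompacts μ] [μ.IsOpenPosMeasure] {ι : Type*} {φ : ι → G → ℝ}
    (hφ : ∀ i, IsBump (φ i)) {L : ι → Set G} (hL : ∀ i, IsCompact (L i))
    (hφL : ∀ i, support (φ i) ⊆ L i) {x : ι → G} (hx : ∀ i, 0 < φ i (x i)) (l : List ι) (g : ι)
    (hz : ∀ s ∈ bracketSplits l, s.2 ≠ [] →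
      (l.map x).prod * x g ∉ ((s.1 ++ g :: s.2.reverse).map L).prod) :
    ¬ iterBracket μ (l.map fun i y => (φ i y : ℂ)) (fun y => (φ g y : ℂ)) =ᵐ[μ] 0 := by
  have hnear : ∀ᶠ w in 𝓝 ((l.map x).prod * x g), ∀ s ∈ bracketSplits l, s.2 ≠ [] →
      w ∉ ((s.1 ++ g :: s.2.reverse).map L).prod :=
    (eventually_all_finite (bracketSplits l).finite_toSet).2 fun s hs =>
      eventually_imp_distrib_left.2 fun hs₂ =>
        (isCompact_list_prod (List.forall_mem_map.2 fun i _ => hL i)).isClosed.isOpen_compl.mem_nhds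
          (hz s hs hs₂)
  have hpos : ∀ᶠ w in 𝓝 ((l.map x).prod * x g), 0 < realConvChain μ (l.map φ) (φ g) w :=
    ((IsBump.realConvChain hφ g l).continuous.tendsto _).eventually
      (lt_mem_nhds (realConvChain_pos hφ hx g l))
  have hbridge : iterBracket μ (l.map fun i y => (φ i y : ℂ)) (fun y => (φ g y : ℂ)) =
      fun y => (realBracket μ (l.map φ) (φ g) y : ℂ) := by
    simpa [List.map_map, Function.comp_def] using iterBracket_ofReal (l.map φ) (φ g)
  intro hae
  obtain ⟨w, hw₀, hwz, hwpos⟩ := (Measure.dense_of_ae hae).inter_nhds_nonempty (hnear.and hpos)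
  rw [Set.mem_ofPred_eq, hbridge, Pi.zero_apply, Complex.ofReal_eq_zero,
    realBracket_eq_realConvChain hφL g l hwz] at hw₀
  exact hwpos.ne' hw₀

theorem quasiGelfand_orbit_product_general
    {G : Type*} [Group G] [TopologicalSpace G] [IsTopologicalGroup G]
    [LocallyCompactSpace G] [T2Space G] [MeasurableSpace G] [BorelSpace G]
    (μ : Measure G) [μ.IsHaarMeasure]
    {K : Type*} [Group K] [TopologicalSpace K] [IsTopologicalGroup K]
    [CompactSpace K] [MeasurableSpace K] [BorelSpace K]
    (ν : Measure K) [ν.IsHaarMeasure]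
    [MulDistribMulAction K G] [ContinuousSMul K G]
    (p : ℕ)
    -- every iterated bracket of `p + 1` K-invariant integrable functions vanishes a.e.
    (hnil : ∀ l : List (G → ℂ), l.length = p →
      (∀ f ∈ l, Integrable f μ ∧ ∀ (k : K) (x : G), f (k • x) = f x) →
      ∀ g : G → ℂ, Integrable g μ → (∀ (k : K) (x : G), g (k • x) = g x) →
      iterBracket μ l g =ᵐ[μ] 0) :
    ∀ x : Fin (p + 1) → G, ∃ m : ℕ, 1 ≤ m ∧ m ≤ p ∧ ∃ σ : Equiv.Perm (Fin (p + 1)),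
      -- the (1-based) position `m` is sent to the (1-based) index `p+1`:
      (∀ i : Fin (p + 1), (i : ℕ) + 1 = m → σ i = Fin.last p) ∧
      -- `σ(1) < σ(2) < ⋯ < σ(m)`:
      (∀ i j : Fin (p + 1), (i : ℕ) < (j : ℕ) → (j : ℕ) < m → σ i < σ j) ∧
      -- `σ(m+1) > σ(m+2) > ⋯ > σ(p+1)`:
      (∀ i j : Fin (p + 1), m ≤ (i : ℕ) → (i : ℕ) < (j : ℕ) → σ j < σ i) ∧
      (List.ofFn x).prod ∈
        (List.ofFn fun i : Fin (p + 1) => Set.range fun k : K => k • x (σ i)).prod := by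
  intro x
  by_contra hcon
  set C : Fin (p + 1) → Set G := fun j => Set.range fun k : K => k • x j
  set base := (List.finRange p).map Fin.castSucc
  have hprod : (List.ofFn x).prod = (base.map x).prod * x (Fin.last p) := by
    rw [List.ofFn_succ', List.prod_concat, List.ofFn_eq_map, List.map_map]
    rfl
  have hC (j : Fin (p + 1)) : IsCompact (C j) :=
    isCompact_range (continuous_id.smul continuous_const)
  have hsmall : ∀ᶠ N in (𝓝 (1 : G)).smallSets, ∀ s ∈ bracketSplits base, s.2 ≠ [] →
      (List.ofFn x).prod ∉ ((s.1 ++ Fin.last p :: s.2.reverse).map (C · * N)).prod := by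
    refine (eventually_all_finite (bracketSplits base).finite_toSet).2 fun s hs =>
      eventually_imp_distrib_left.2 fun hs₂ => eventually_smallSets_notMem_prod_map_mul hC ?_
    obtain ⟨m, hm₁, hm, σ, hσm, hσinc, hσdec, hσ⟩ := exists_perm_of_mem_bracketSplits hs hs₂
    refine fun hmem => hcon ⟨m, hm₁, hm, σ, hσm, hσinc, hσdec, ?_⟩
    rwa [← hσ, List.map_ofFn] at hmem
  obtain ⟨N, ⟨hN, hNc⟩, hNz⟩ := ((compact_basis_nhds (1 : G)).smallSets).eventually_iff.1 hsmall
  choose φ hφ hφK hφx hφC using fun j => exists_isBump_smul_invariant ν (x₀ := x j)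
    (isOpen_interior.mul_left (s := C j)) fun k => by
      simpa using Set.mul_mem_mul (Set.mem_range_self k) (mem_interior_iff_mem_nhds.2 hN)
  refine not_iterBracket_ofReal_ae_eq_zero hφ (fun j => (hC j).mul hNc)
    (fun j => (hφC j).trans (Set.mul_subset_mul_left interior_subset)) hφx base (Fin.last p)
    (hprod ▸ hNz (Set.mem_powerset subset_rfl))
    (hnil _ (by simp [base])
      (List.forall_mem_map.2 fun j _ => ⟨(hφ j).integrable_ofReal, fun k y => by simp [hφK]⟩)
      _ (hφ _).integrable_ofReal fun k y => by simp [hφK])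

/-- If `(G, K)` is a quasi-Gelfand pair of order `p`, then for all
`x₁, …, x_{p+1} ∈ G` (indexed here by `Fin (p+1)`, i.e. `0, …, p`) there exist
`m ∈ {1, …, p}` and a permutation `σ` of the indices with `σ(m) = p+1` (in `1`-based
notation), `σ(1) < ⋯ < σ(m)` and `σ(m+1) > ⋯ > σ(p+1)`, such that
`x₁x₂⋯x_{p+1} ∈ (K·x_{σ(1)})(K·x_{σ(2)})⋯(K·x_{σ(p+1)})`. -/
theorem quasiGelfand_orbit_product
    {G : Type*} [Group G] [TopologicalSpace G] [IsTopologicalGroup G]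
    [LocallyCompactSpace G] [T2Space G] [MeasurableSpace G] [BorelSpace G]
    (μ : Measure G) [μ.IsHaarMeasure]
    {K : Type*} [Group K] [TopologicalSpace K] [IsTopologicalGroup K]
    [CompactSpace K] [T2Space K] [MeasurableSpace K] [BorelSpace K]
    (ν : Measure K) [ν.IsHaarMeasure] [IsProbabilityMeasure ν]
    [MulDistribMulAction K G] [ContinuousSMul K G] [SMulInvariantMeasure K G μ]
    (p : ℕ) (hp : 1 ≤ p)
    -- every iterated bracket of `p + 1` K-invariant integrable functions vanishes a.e.
    (hnil : ∀ l : List (G → ℂ), l.length = p →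
      (∀ f ∈ l, Integrable f μ ∧ ∀ (k : K) (x : G), f (k • x) = f x) →
      ∀ g : G → ℂ, Integrable g μ → (∀ (k : K) (x : G), g (k • x) = g x) →
      iterBracket μ l g =ᵐ[μ] 0)
    -- some iterated bracket of `p` K-invariant integrable functions does not vanish a.e.
    (hstep : ∃ l : List (G → ℂ), ∃ g : G → ℂ, l.length = p - 1 ∧
      (∀ f ∈ l, Integrable f μ ∧ ∀ (k : K) (x : G), f (k • x) = f x) ∧
      Integrable g μ ∧ (∀ (k : K) (x : G), g (k • x) = g x) ∧
      ¬ (iterBracket μ l g =ᵐ[μ] 0)) :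
    ∀ x : Fin (p + 1) → G, ∃ m : ℕ, 1 ≤ m ∧ m ≤ p ∧ ∃ σ : Equiv.Perm (Fin (p + 1)),
      -- the (1-based) position `m` is sent to the (1-based) index `p+1`:
      (∀ i : Fin (p + 1), (i : ℕ) + 1 = m → σ i = Fin.last p) ∧
      -- `σ(1) < σ(2) < ⋯ < σ(m)`:
      (∀ i j : Fin (p + 1), (i : ℕ) < (j : ℕ) → (j : ℕ) < m → σ i < σ j) ∧
      -- `σ(m+1) > σ(m+2) > ⋯ > σ(p+1)`:
      (∀ i j : Fin (p + 1), m ≤ (i : ℕ) → (i : ℕ) < (j : ℕ) → σ j < σ i) ∧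
      (List.ofFn x).prod ∈
        (List.ofFn fun i : Fin (p + 1) => Set.range fun k : K => k • x (σ i)).prod :=
  quasiGelfand_orbit_product_general μ ν p hnil
end

section
/- Let G be a locally compact Hausdorff topological group with a left Haar measure μ. If f⋆g = g⋆f (μ-almost everywhere) for all continuous compactly supported functions f, g : G → ℂ, then G is commutative. -/
open MeasureTheory

/-!
If `a * b ≠ b * a`, choose nonnegative bumps `φ` at `a` and `ψ` at `b` whose supports satisfy
`a * b ∉ supp ψ * supp φ`. Then `(φ ⋆ ψ)(a b) > 0` while `ψ ⋆ φ` vanishes at `a b`. Both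
convolutions are continuous and Haar measure charges every nonempty open set, so a.e. equality
of the two convolutions would force equality at `a b`.
-/

open Function Set
open scoped Pointwise

theorem exists_isOpen_notMem_mul {M : Type*} [Mul M] [TopologicalSpace M] [ContinuousMul M]
    [T1Space M] {x y z : M} (h : y * z ≠ x) :
    ∃ U V : Set M, IsOpen U ∧ IsOpen V ∧ y ∈ U ∧ z ∈ V ∧ x ∉ U * V := by
  have hopen : IsOpen ((fun p : M × M => p.1 * p.2) ⁻¹' {x}ᶜ) :=
    isOpen_compl_singleton.preimage continuous_mul
  obtain ⟨U, V, hU, hV, hyU, hzV, hUV⟩ := isOpen_prod_iff.mp hopen y z h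
  refine ⟨U, V, hU, hV, hyU, hzV, ?_⟩
  rintro ⟨u, hu, v, hv, rfl⟩
  exact hUV (mk_mem_prod hu hv) rfl

theorem exists_continuous_nonneg_support_subset {X : Type*} [TopologicalSpace X]
    [RegularSpace X] [LocallyCompactSpace X] {U : Set X} (hU : IsOpen U) {x : X} (hx : x ∈ U) :
    ∃ φ : X → ℝ, Continuous φ ∧ HasCompactSupport φ ∧ 0 ≤ φ ∧ φ x ≠ 0 ∧ support φ ⊆ U := by
  obtain ⟨φ, hφx, hφU, hφc, hφ01⟩ := exists_continuous_one_zero_of_isCompact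
    isCompact_singleton hU.isClosed_compl (disjoint_singleton_left.mpr (not_not.mpr hx))
  refine ⟨φ, φ.continuous, hφc, fun y => (hφ01 y).1, by simp [hφx rfl], fun y hy => ?_⟩
  by_contra hyU
  exact hy (hφU hyU)

section Convolution

variable {G : Type*} [Group G] [MeasurableSpace G] (μ : Measure G)

theorem convolution'_eq_zero_of_notMem_mul {f g : G → ℂ} {x : G}
    (hx : x ∉ support f * support g) : convolution' μ f g x = 0 := by
  have hzero : ∀ y, f y * g (y⁻¹ * x) = 0 := fun y => by
    by_contra hy
    exact hx ⟨y, left_ne_zero_of_mul hy, y⁻¹ * x, right_ne_zero_of_mul hy,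
      mul_inv_cancel_left y x⟩
  simp [convolution', hzero]

variable [TopologicalSpace G] [IsTopologicalGroup G] [OpensMeasurableSpace G]

theorem continuous_convolution' [IsFiniteMeasureOnCompacts μ] {f g : G → ℂ} (hf : Continuous f)
    (hf' : HasCompactSupport f) (hg : Continuous g) : Continuous (convolution' μ f g) := by
  rw [← continuousOn_univ]
  refine continuousOn_integral_of_compact_support hf' ?_ fun x y _ hy => ?_
  · exact Continuous.continuousOn (by fun_prop)
  · simp [image_eq_zero_of_notMem_tsupport hy]

theorem convolution'_ofReal_mul_ne_zero [IsFiniteMeasureOnCompacts μ] [μ.IsOpenPosMeasure]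
    {φ ψ : G → ℝ} (hφ : Continuous φ) (hφ' : HasCompactSupport φ) (hφ0 : 0 ≤ φ)
    (hψ : Continuous ψ) (hψ0 : 0 ≤ ψ) {a b : G} (ha : φ a ≠ 0) (hb : ψ b ≠ 0) :
    convolution' μ (fun x => (φ x : ℂ)) (fun x => (ψ x : ℂ)) (a * b) ≠ 0 := by
  have hpos : 0 < ∫ y, φ y * ψ (y⁻¹ * (a * b)) ∂μ :=
    Continuous.integral_pos_of_hasCompactSupport_nonneg_nonzero (by fun_prop) hφ'.mul_right
      (fun y => mul_nonneg (hφ0 y) (hψ0 _)) (x := a) (by simp [ha, hb])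
  have hreal : convolution' μ (fun x => (φ x : ℂ)) (fun x => (ψ x : ℂ)) (a * b)
      = ↑(∫ y, φ y * ψ (y⁻¹ * (a * b)) ∂μ) := by
    simp only [convolution', ← Complex.ofReal_mul]
    exact integral_ofReal
  rw [hreal, Complex.ofReal_ne_zero]
  exact hpos.ne'

end Convolution

/-- Let `G` be a locally compact Hausdorff topological group with left Haar measure
`μ`. If `f ⋆ g = g ⋆ f` μ-a.e. for all continuous compactly supported `f, g : G → ℂ`,
then `G` is commutative. -/
theorem commutative_of_convolution_comm
    {G : Type*} [Group G] [TopologicalSpace G] [IsTopologicalGroup G]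
    [LocallyCompactSpace G] [T2Space G] [MeasurableSpace G] [BorelSpace G]
    (μ : Measure G) [μ.IsHaarMeasure]
    (h : ∀ f g : G → ℂ, Continuous f → HasCompactSupport f →
      Continuous g → HasCompactSupport g →
      convolution' μ f g =ᵐ[μ] convolution' μ g f) :
    ∀ a b : G, a * b = b * a := by
  intro a b
  by_contra hab
  obtain ⟨B, A, hB, hA, hbB, haA, hab_notMem⟩ := exists_isOpen_notMem_mul (Ne.symm hab)
  obtain ⟨φ, hφ, hφ', hφ0, hφa, hφA⟩ := exists_continuous_nonneg_support_subset hA haA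
  obtain ⟨ψ, hψ, hψ', hψ0, hψb, hψB⟩ := exists_continuous_nonneg_support_subset hB hbB
  set f : G → ℂ := fun x => (φ x : ℂ)
  set g : G → ℂ := fun x => (ψ x : ℂ)
  have hf : Continuous f := Complex.continuous_ofReal.comp hφ
  have hg : Continuous g := Complex.continuous_ofReal.comp hψ
  have hf' : HasCompactSupport f := hφ'.comp_left Complex.ofReal_zero
  have hg' : HasCompactSupport g := hψ'.comp_left Complex.ofReal_zero
  have hcomm : convolution' μ f g = convolution' μ g f :=
    ((continuous_convolution' μ hf hf' hg).ae_eq_iff_eq μ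
      (continuous_convolution' μ hg hg' hf)).mp (h f g hf hf' hg hg')
  have hsupp : support g * support f ⊆ B * A :=
    mul_subset_mul (by simpa [g] using hψB) (by simpa [f] using hφA)
  apply convolution'_ofReal_mul_ne_zero μ hφ hφ' hφ0 hψ hψ0 hφa hψb
  rw [hcomm]
  exact convolution'_eq_zero_of_notMem_mul μ fun hmem => hab_notMem (hsupp hmem)
end
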